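/- For every integer t ≥ 1, the number of 3×3 matrices of integers with all entries strictly between 0 and t (entries not required to be distinct) in which the three row sums, the three column sums, the main-diagonal sum x₁₁+x₂₂+x₃₃, and the antidiagonal sum x₁₃+x₂₂+x₃₁ are all equal, is (t−1)(t²−2t+3)/6 if t is odd and (t−1)(t²−2t+6)/6 if t is even. -/

import Mathlib

/-- `WeakMc t` = number of weak 3×3 magic squares (entries not required to be
distinct) all of whose entries lie strictly between 0 and t. -/
noncomputable def WeakMc (t : ℕ) : ℕ :=
  {x : Matrix (Fin 3) (Fin 3) ℤ |
    (∃ s : ℤ, (∀ i, ∑ j, x i j = s) ∧ (∀ j, ∑ i, x i j = s) ∧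
      x 0 0 + x 1 1 + x 2 2 = s ∧ x 0 2 + x 1 1 + x 2 0 = s) ∧
    ∀ i j, 0 < x i j ∧ x i j < (t : ℤ)}.ncard

/-!
A weak magic square is determined by its centre `c` and the offsets `a`, `b` of two corners
from it: its entries are `c`, `c ± a`, `c ± b`, `c ± (a + b)`, `c ± (a - b)`, and its magic sum
is `3c`. All entries lie in `(0, t)` exactly when `|a| + |b| < min c (t - c)`, so for each
centre the offsets range over a lattice diamond, which has `(m + 1)² + m²` points for radius `m`.
Summing over the centres, the radii rise to the middle and fall again, and the two halves are
sums of `(m + 1)² + m²`, whose closed form is cubic; the parity of `t` decides whether the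
middle radius occurs once or twice.
-/

open Finset

section MagicSquare

variable {R : Type*} [CommRing R]

def magicSquare (c a b : R) : Matrix (Fin 3) (Fin 3) R :=
  !![c + a, c - a - b, c + b;
     c - a + b, c, c + a - b;
     c - b, c + a + b, c - a]

def IsWeakMagic (x : Matrix (Fin 3) (Fin 3) R) : Prop :=
  ∃ s : R, (∀ i, ∑ j, x i j = s) ∧ (∀ j, ∑ i, x i j = s) ∧
    x 0 0 + x 1 1 + x 2 2 = s ∧ x 0 2 + x 1 1 + x 2 0 = s

theorem isWeakMagic_magicSquare (c a b : R) : IsWeakMagic (magicSquare c a b) := by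
  refine ⟨3 * c, fun i => ?_, fun j => ?_, ?_, ?_⟩
  · fin_cases i <;> simp [magicSquare, Fin.sum_univ_three] <;> ring
  · fin_cases j <;> simp [magicSquare, Fin.sum_univ_three] <;> ring
  · show c + a + c + (c - a) = 3 * c
    ring
  · show c + b + c + (c - b) = 3 * c
    ring

theorem IsWeakMagic.eq_magicSquare {x : Matrix (Fin 3) (Fin 3) R} (hx : IsWeakMagic x) :
    x = magicSquare (x 1 1) (x 0 0 - x 1 1) (x 0 2 - x 1 1) := by
  obtain ⟨s, hrow, hcol, hdiag, hanti⟩ := hx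
  simp only [Fin.sum_univ_three] at hrow hcol
  -- the middle row, the middle column and both diagonals cover the square once and the centre
  -- three more times, so `4s = 3s + 3 x₁₁`
  have hs : s = 3 * x 1 1 := by
    linear_combination hrow 0 + hrow 2 - hcol 1 - hdiag - hanti
  ext i j
  fin_cases i <;> fin_cases j <;> simp [magicSquare]
  · linear_combination hrow 0 + hs
  · linear_combination hcol 0 - hanti
  · linear_combination hcol 2 - hdiag
  · linear_combination hanti + hs
  · linear_combination hcol 1 - hrow 0
  · linear_combination hdiag + hs

theorem magicSquare_inj {c a b c' a' b' : R} :
    magicSquare c a b = magicSquare c' a' b' ↔ c = c' ∧ a = a' ∧ b = b' := by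
  refine ⟨fun h => ?_, by rintro ⟨rfl, rfl, rfl⟩; rfl⟩
  have hc : c = c' := congrFun₂ h 1 1
  have hca : c + a = c' + a' := congrFun₂ h 0 0
  have hcb : c + b = c' + b' := congrFun₂ h 0 2
  subst hc
  exact ⟨rfl, add_left_cancel hca, add_left_cancel hcb⟩

variable [LinearOrder R] [IsStrictOrderedRing R]

theorem magicSquare_entries_bounded_iff (L U c a b : R) :
    (∀ i j, L < magicSquare c a b i j ∧ magicSquare c a b i j < U) ↔
      L + (|a| + |b|) < c ∧ c + (|a| + |b|) < U := by
  constructor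
  · intro h
    have hpp : L < c + a + b ∧ c + a + b < U := h 2 1
    have hmm : L < c - a - b ∧ c - a - b < U := h 0 1
    have hpm : L < c + a - b ∧ c + a - b < U := h 1 2
    have hmp : L < c - a + b ∧ c - a + b < U := h 1 0
    rcases abs_cases a with ⟨ha, _⟩ | ⟨ha, _⟩ <;> rcases abs_cases b with ⟨hb, _⟩ | ⟨hb, _⟩ <;>
      constructor <;> linarith
  · rintro ⟨hL, hU⟩ i j
    have := le_abs_self a; have := neg_abs_le a; have := le_abs_self b; have := neg_abs_le b
    fin_cases i <;> fin_cases j <;> simp [magicSquare] <;> constructor <;> linarith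

theorem abs_add_abs_le_iff {a b c : R} : |a| + |b| ≤ c ↔ |a + b| ≤ c ∧ |a - b| ≤ c := by
  refine ⟨fun h => ⟨(abs_add_le a b).trans h, (abs_sub a b).trans h⟩, fun ⟨hadd, hsub⟩ => ?_⟩
  obtain ⟨hadd₁, hadd₂⟩ := abs_le.mp hadd
  obtain ⟨hsub₁, hsub₂⟩ := abs_le.mp hsub
  rcases abs_cases a with ⟨ha, _⟩ | ⟨ha, _⟩ <;> rcases abs_cases b with ⟨hb, _⟩ | ⟨hb, _⟩ <;>
    rw [ha, hb] <;> linarith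

end MagicSquare

section Diamond

noncomputable def diamond (m : ℕ) : Finset (ℤ × ℤ) :=
  (Icc (-m : ℤ) m ×ˢ Icc (-m : ℤ) m).filter fun p => |p.1| + |p.2| ≤ m

theorem mem_diamond {m : ℕ} {p : ℤ × ℤ} : p ∈ diamond m ↔ |p.1| + |p.2| ≤ m := by
  simp only [diamond, mem_filter, mem_product, mem_Icc, and_iff_right_iff_imp, abs_add_abs_le_iff,
    abs_le]
  omega

/-- The points of the diamond with `a + b + m` even, resp. odd, form a rotated
`(m + 1) × (m + 1)`, resp. `m × m`, grid. -/
theorem diamond_eq_union (m : ℕ) :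
    diamond m =
      (Icc 0 (m : ℤ) ×ˢ Icc 0 (m : ℤ)).image (fun q : ℤ × ℤ => (q.1 + q.2 - m, q.1 - q.2)) ∪
      (Icc 0 (m - 1 : ℤ) ×ˢ Icc 0 (m - 1 : ℤ)).image
        (fun q : ℤ × ℤ => (q.1 + q.2 - m + 1, q.1 - q.2)) := by
  ext ⟨a, b⟩
  simp only [mem_diamond, abs_add_abs_le_iff, abs_le, mem_union, mem_image, mem_product, mem_Icc,
    Prod.exists, Prod.mk.injEq]
  constructor
  · intro h
    rcases Int.emod_two_eq_zero_or_one (a + b + m) with hpar | hpar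
    · exact .inl ⟨(a + b + m) / 2, (a - b + m) / 2, by omega⟩
    · exact .inr ⟨(a + b + m - 1) / 2, (a - b + m - 1) / 2, by omega⟩
  · rintro (⟨i, j, _, rfl, rfl⟩ | ⟨i, j, _, rfl, rfl⟩) <;> omega

theorem card_diamond (m : ℕ) : #(diamond m) = (m + 1) ^ 2 + m ^ 2 := by
  rw [diamond_eq_union, card_union_of_disjoint, card_image_of_injective, card_image_of_injective,
    card_product, card_product, Int.card_Icc, Int.card_Icc]
  · rw [show ((m : ℤ) + 1 - 0).toNat = m + 1 by omega, show ((m : ℤ) - 1 + 1 - 0).toNat = m by omega]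
    ring
  · exact fun p q h => by simp only [Prod.mk.injEq] at h; ext <;> omega
  · exact fun p q h => by simp only [Prod.mk.injEq] at h; ext <;> omega
  · rw [disjoint_left]
    simp only [mem_image, mem_product, mem_Icc, Prod.exists]
    rintro _ ⟨i, j, _, rfl⟩ ⟨i', j', _, h⟩
    simp only [Prod.mk.injEq] at h
    omega

end Diamond

-- The centre `c + 1` runs over `1, …, t - 1`; the diamond radius is its distance to the
-- nearer end of that range.
theorem setOf_bounded_isWeakMagic_eq_image (t : ℕ) :
    {x : Matrix (Fin 3) (Fin 3) ℤ | IsWeakMagic x ∧ ∀ i j, 0 < x i j ∧ x i j < (t : ℤ)} =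
      (fun p : Σ _ : ℕ, ℤ × ℤ => magicSquare ((p.1 : ℤ) + 1) p.2.1 p.2.2) ''
        ↑((range (t - 1)).sigma fun c => diamond (min c (t - 2 - c))) := by
  ext x
  simp only [Set.mem_ofPred_eq, Set.mem_image, coe_sigma, Set.mem_sigma_iff, mem_coe, mem_range,
    mem_diamond]
  constructor
  · rintro ⟨hx, hbound⟩
    have hcentre := (hbound 1 1).1
    rw [hx.eq_magicSquare, magicSquare_entries_bounded_iff] at hbound
    -- `omega` treats `|·|` as an opaque atom but understands `natAbs`
    simp only [Int.abs_eq_natAbs] at hbound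
    refine ⟨⟨(x 1 1 - 1).toNat, x 0 0 - x 1 1, x 0 2 - x 1 1⟩, ⟨?_, ?_⟩, ?_⟩
    · dsimp only
      omega
    · simp only [Int.abs_eq_natAbs]
      omega
    · refine Eq.trans ?_ hx.eq_magicSquare.symm
      dsimp only
      congr 1
      omega
  · rintro ⟨⟨c, a, b⟩, ⟨hc, hd⟩, rfl⟩
    exact ⟨isWeakMagic_magicSquare _ _ _,
      (magicSquare_entries_bounded_iff _ _ _ _ _).mpr ⟨by omega, by omega⟩⟩

theorem weakMc_eq_sum_card_diamond (t : ℕ) :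
    WeakMc t = ∑ c ∈ range (t - 1), #(diamond (min c (t - 2 - c))) := by
  rw [← card_sigma, ← Set.ncard_coe_finset, ← Set.ncard_image_of_injective _ ?_,
    ← setOf_bounded_isWeakMagic_eq_image]
  · rfl
  · rintro ⟨c, a, b⟩ ⟨c', a', b'⟩ h
    obtain ⟨hc, rfl, rfl⟩ := magicSquare_inj.mp h
    obtain rfl : c = c' := by simpa using hc
    rfl

theorem sum_range_min_sub_reflect {M : Type*} [AddCommMonoid M] (f : ℕ → M) (n : ℕ) :
    ∑ c ∈ range n, f (min c (n - 1 - c)) =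
      ∑ c ∈ range ((n + 1) / 2), f c + ∑ c ∈ range (n / 2), f c := by
  rw [show range n = range ((n + 1) / 2 + n / 2) by congr 1; omega, sum_range_add,
    ← sum_range_reflect _ (n / 2)]
  congr 1 <;> refine sum_congr rfl fun c hc => congrArg f ?_ <;> rw [mem_range] at hc <;> omega

theorem three_mul_sum_range_sq_add_sq (k : ℕ) :
    3 * ∑ c ∈ range k, ((c + 1) ^ 2 + c ^ 2) = 2 * k ^ 3 + k := by
  induction k with
  | zero => rfl
  | succ k ih => rw [sum_range_succ, mul_add, ih]; ring

theorem three_mul_weakMc (t : ℕ) :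
    3 * WeakMc t = 2 * (t / 2) ^ 3 + t / 2 + (2 * ((t - 1) / 2) ^ 3 + (t - 1) / 2) := by
  have h := sum_range_min_sub_reflect (fun m => (m + 1) ^ 2 + m ^ 2) (t - 1)
  rw [show t - 1 - 1 = t - 2 by omega, show (t - 1 + 1) / 2 = t / 2 by omega] at h
  rw [weakMc_eq_sum_card_diamond]
  simp only [card_diamond]
  rw [h, mul_add, three_mul_sum_range_sq_add_sq, three_mul_sum_range_sq_add_sq]

theorem weak_magic_cubic_count (t : ℕ) (ht : 1 ≤ t) :
    (Odd t → 6 * (WeakMc t : ℤ) = ((t : ℤ) - 1) * ((t : ℤ)^2 - 2*(t : ℤ) + 3)) ∧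
    (Even t → 6 * (WeakMc t : ℤ) = ((t : ℤ) - 1) * ((t : ℤ)^2 - 2*(t : ℤ) + 6)) := by
  have h : (3 * WeakMc t : ℤ) =
      2 * (t / 2 : ℕ) ^ 3 + (t / 2 : ℕ) + (2 * ((t - 1) / 2 : ℕ) ^ 3 + ((t - 1) / 2 : ℕ)) := by
    exact_mod_cast three_mul_weakMc t
  constructor
  · rintro ⟨k, rfl⟩
    rw [show (2 * k + 1) / 2 = k by omega, show (2 * k + 1 - 1) / 2 = k by omega] at h
    push_cast
    linear_combination 2 * h
  · rintro ⟨k, rfl⟩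
    obtain ⟨j, rfl⟩ : ∃ j, k = j + 1 := ⟨k - 1, by omega⟩
    rw [show (j + 1 + (j + 1)) / 2 = j + 1 by omega, show (j + 1 + (j + 1) - 1) / 2 = j by omega] at h
    push_cast at h ⊢
    linear_combination 2 * h
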